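/- arXiv:1712.02412 — 2 statements merged into one kernel-verified Lean document; each statement's English description precedes it below -/
import Mathlib

section
/- Suppose β̃ ∈ ℝᵖ is a minimizer over β of the square-root lasso objective (1/√n)·‖y − Xβ‖₂ + λ·‖β‖₁ with ‖y − Xβ̃‖₂ > 0 and λ = 3·n^{−1/2}·‖Xᵀε‖_∞ / ‖y − Xβ̃‖₂, where y = Xβ* + ε. Then (1/n)·‖X(β* − β̃)‖₂² ≤ (4/n)·‖Xᵀε‖_∞·‖β*‖₁ − (2/n)·‖Xᵀε‖_∞·‖β̃‖₁, and consequently |(1/n)·‖y − Xβ̃‖₂² − (1/n)·‖ε‖₂²| ≤ (6/n)·‖Xᵀε‖_∞·‖β*‖₁. -/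
/-!
Moving the minimiser β̃ towards β* along (1 - t) β̃ + t β* and letting t → 0⁺ yields the
first-order condition ⟨y - Xβ̃, X(β* - β̃)⟩ ≤ λ √n ‖y - Xβ̃‖₂ (‖β*‖₁ - ‖β̃‖₁), which the choice
of λ turns into 3 ‖Xᵀε‖_∞ (‖β*‖₁ - ‖β̃‖₁); the tangent-line bound √x ≤ (x + s²) / (2s) stands in
for the derivative of the Euclidean norm. Writing y - Xβ̃ = X(β* - β̃) + ε and bounding
|⟨ε, X(β* - β̃)⟩| = |⟨Xᵀε, β* - β̃⟩| ≤ ‖Xᵀε‖_∞ (‖β*‖₁ + ‖β̃‖₁) by Hölder, both claims follow by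
linear arithmetic, the lower half of the second one from ‖X(β* - β̃)‖₂² ≥ 0.
-/

open MeasureTheory ProbabilityTheory Matrix
open scoped ENNReal

noncomputable section

/-- squared Euclidean norm on ℝⁿ -/
def l2sq {n : ℕ} (v : Fin n → ℝ) : ℝ := ∑ i, (v i) ^ 2

/-- ℓ₁ norm on ℝᵖ -/
def l1 {p : ℕ} (b : Fin p → ℝ) : ℝ := ∑ j, |b j|

/-- sup norm on ℝᵖ -/
def linf {p : ℕ} (v : Fin p → ℝ) : ℝ := ⨆ j, |v j|

open Filter Topology

lemma l2sq_eq_dotProduct {n : ℕ} (v : Fin n → ℝ) : l2sq v = v ⬝ᵥ v := by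
  simp only [l2sq, dotProduct, sq]

lemma l2sq_nonneg {n : ℕ} (v : Fin n → ℝ) : 0 ≤ l2sq v :=
  Finset.sum_nonneg fun _ _ => sq_nonneg _

lemma l2sq_add {n : ℕ} (u w : Fin n → ℝ) :
    l2sq (u + w) = l2sq u + 2 * (u ⬝ᵥ w) + l2sq w := by
  simp only [l2sq_eq_dotProduct, add_dotProduct, dotProduct_add, dotProduct_comm w u]
  ring

lemma l2sq_sub_smul {n : ℕ} (u w : Fin n → ℝ) (t : ℝ) :
    l2sq (u - t • w) = l2sq u - 2 * t * (u ⬝ᵥ w) + t ^ 2 * l2sq w := by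
  simp only [l2sq_eq_dotProduct, sub_dotProduct, dotProduct_sub, smul_dotProduct,
    dotProduct_smul, dotProduct_comm w u, smul_eq_mul]
  ring

lemma l1_sub_le {p : ℕ} (u v : Fin p → ℝ) : l1 (u - v) ≤ l1 u + l1 v := by
  rw [l1, l1, l1, ← Finset.sum_add_distrib]
  exact Finset.sum_le_sum fun j _ => abs_sub (u j) (v j)

lemma l1_smul_add_smul_le {p : ℕ} (u v : Fin p → ℝ) {s t : ℝ} (hs : 0 ≤ s) (ht : 0 ≤ t) :
    l1 (s • u + t • v) ≤ s * l1 u + t * l1 v := by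
  rw [l1, l1, l1, Finset.mul_sum, Finset.mul_sum, ← Finset.sum_add_distrib]
  refine Finset.sum_le_sum fun j _ => (abs_add_le _ _).trans_eq ?_
  simp only [Pi.smul_apply, smul_eq_mul, abs_mul, abs_of_nonneg hs,
    abs_of_nonneg ht]

lemma abs_le_linf {p : ℕ} (v : Fin p → ℝ) (j : Fin p) : |v j| ≤ linf v :=
  le_ciSup (Set.finite_range fun j => |v j|).bddAbove j

lemma linf_nonneg {p : ℕ} (v : Fin p → ℝ) : 0 ≤ linf v :=
  Real.iSup_nonneg fun j => abs_nonneg (v j)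

lemma abs_dotProduct_le_linf_mul_l1 {p : ℕ} (u v : Fin p → ℝ) :
    |u ⬝ᵥ v| ≤ linf u * l1 v :=
  calc |u ⬝ᵥ v| ≤ ∑ j, |u j| * |v j| := by
        simpa only [dotProduct, abs_mul] using Finset.abs_sum_le_sum_abs (fun j => u j * v j) _
    _ ≤ ∑ j, linf u * |v j| := by gcongr with j; exact abs_le_linf u j
    _ = linf u * l1 v := by rw [l1, Finset.mul_sum]

lemma abs_dotProduct_mulVec_le {n p : ℕ} (X : Matrix (Fin n) (Fin p) ℝ) (ε : Fin n → ℝ)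
    (v : Fin p → ℝ) : |ε ⬝ᵥ X *ᵥ v| ≤ linf (Xᵀ *ᵥ ε) * l1 v := by
  rw [dotProduct_mulVec, ← mulVec_transpose]
  exact abs_dotProduct_le_linf_mul_l1 _ _

lemma sqrt_le_add_sq_div {x s : ℝ} (hx : 0 ≤ x) (hs : 0 < s) :
    Real.sqrt x ≤ (x + s ^ 2) / (2 * s) := by
  rw [le_div_iff₀ (by positivity)]
  nlinarith [two_mul_le_add_sq (Real.sqrt x) s, Real.sq_sqrt hx]

lemma nonpos_of_forall_le_mul {A B : ℝ} (h : ∀ t : ℝ, 0 < t → t ≤ 1 → A ≤ t * B) : A ≤ 0 := by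
  have hlim : Tendsto (fun t : ℝ => t * B) (𝓝[>] 0) (𝓝 (0 * B)) :=
    tendsto_nhdsWithin_of_tendsto_nhds ((continuous_mul_const B).tendsto 0)
  rw [zero_mul] at hlim
  refine ge_of_tendsto hlim ?_
  filter_upwards [Ioc_mem_nhdsGT one_pos] with t ht using h t ht.1 ht.2

lemma dotProduct_le_of_forall_sqrt_l2sq_le {n : ℕ} {r w : Fin n → ℝ} {c : ℝ}
    (hr : 0 < Real.sqrt (l2sq r))
    (h : ∀ t : ℝ, 0 < t → t ≤ 1 →
      Real.sqrt (l2sq r) ≤ Real.sqrt (l2sq (r - t • w)) + t * c) :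
    r ⬝ᵥ w ≤ c * Real.sqrt (l2sq r) := by
  set s := Real.sqrt (l2sq r)
  have hs2 : s ^ 2 = l2sq r := Real.sq_sqrt (l2sq_nonneg r)
  refine sub_nonpos.1 (nonpos_of_forall_le_mul (B := l2sq w / 2) fun t ht0 ht1 => ?_)
  have hdecrease :=
    (h t ht0 ht1).trans (add_le_add_left (sqrt_le_add_sq_div (l2sq_nonneg _) hr) _)
  rw [← sub_le_iff_le_add, le_div_iff₀ (by positivity), l2sq_sub_smul, ← hs2] at hdecrease
  have : t * (r ⬝ᵥ w - c * s) ≤ t * (t * (l2sq w / 2)) := by linarith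
  exact le_of_mul_le_mul_left this ht0

def sqrtLassoObjective {n p : ℕ} (X : Matrix (Fin n) (Fin p) ℝ) (y : Fin n → ℝ) (lam : ℝ)
    (β : Fin p → ℝ) : ℝ :=
  1 / Real.sqrt n * Real.sqrt (l2sq (y - X *ᵥ β)) + lam * l1 β

lemma sqrtLasso_residual_dotProduct_le {n p : ℕ} (hn : 0 < n)
    {X : Matrix (Fin n) (Fin p) ℝ} {y : Fin n → ℝ} {lam : ℝ} (hlam : 0 ≤ lam)
    {βt : Fin p → ℝ} (hmin : ∀ β, sqrtLassoObjective X y lam βt ≤ sqrtLassoObjective X y lam β)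
    (hpos : 0 < Real.sqrt (l2sq (y - X *ᵥ βt))) (β : Fin p → ℝ) :
    (y - X *ᵥ βt) ⬝ᵥ X *ᵥ (β - βt)
      ≤ lam * Real.sqrt n * (l1 β - l1 βt) * Real.sqrt (l2sq (y - X *ᵥ βt)) := by
  have hsqrt_n : 0 < Real.sqrt n := Real.sqrt_pos.2 (Nat.cast_pos.2 hn)
  refine dotProduct_le_of_forall_sqrt_l2sq_le hpos fun t ht0 ht1 => ?_
  have hres : y - X *ᵥ ((1 - t) • βt + t • β) = y - X *ᵥ βt - t • X *ᵥ (β - βt) := by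
    simp only [mulVec_add, mulVec_smul, mulVec_sub]
    module
  have hl1 := l1_smul_add_smul_le βt β (sub_nonneg.2 ht1) ht0.le
  have hcomb := mul_le_mul_of_nonneg_left (hmin ((1 - t) • βt + t • β)) hsqrt_n.le
  simp only [sqrtLassoObjective, hres, mul_add, ← mul_assoc, mul_one_div_cancel hsqrt_n.ne',
    one_mul] at hcomb
  linarith [mul_le_mul_of_nonneg_left hl1 (mul_nonneg hsqrt_n.le hlam)]

lemma l2sq_le_and_abs_l2sq_add_sub_le {n : ℕ} {w ε : Fin n → ℝ} {L a b : ℝ}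
    (hE : |ε ⬝ᵥ w| ≤ L * (a + b)) (hD : l2sq w + ε ⬝ᵥ w ≤ 3 * L * (a - b)) :
    l2sq w ≤ 4 * L * a - 2 * L * b ∧ |l2sq (w + ε) - l2sq ε| ≤ 6 * L * a := by
  obtain ⟨hE_lower, hE_upper⟩ := abs_le.1 hE
  have hpred : l2sq w ≤ 4 * L * a - 2 * L * b := by linarith
  rw [l2sq_add, dotProduct_comm, add_sub_cancel_right, abs_le]
  exact ⟨hpred, by linarith [l2sq_nonneg w], by linarith⟩

/-- deterministic bound for the square-root lasso with
λ = 3 n^{-1/2} ‖Xᵀε‖_∞ / ‖y − Xβ̃‖₂. -/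
theorem sqrt_lasso_deterministic_bound {n p : ℕ} (hn : 0 < n)
    (X : Matrix (Fin n) (Fin p) ℝ) (βstar : Fin p → ℝ) (ε : Fin n → ℝ)
    (y : Fin n → ℝ) (hy : y = X.mulVec βstar + ε)
    (βt : Fin p → ℝ) (lam : ℝ)
    (hpos : 0 < Real.sqrt (l2sq (y - X.mulVec βt)))
    (hlam : lam = 3 * linf (Xᵀ.mulVec ε)
        / (Real.sqrt n * Real.sqrt (l2sq (y - X.mulVec βt))))
    (hmin : ∀ β : Fin p → ℝ,
      (1 / Real.sqrt n) * Real.sqrt (l2sq (y - X.mulVec βt)) + lam * l1 βt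
        ≤ (1 / Real.sqrt n) * Real.sqrt (l2sq (y - X.mulVec β)) + lam * l1 β) :
    (1/n) * l2sq (X.mulVec βstar - X.mulVec βt)
        ≤ (4/n) * linf (Xᵀ.mulVec ε) * l1 βstar - (2/n) * linf (Xᵀ.mulVec ε) * l1 βt ∧
    |(1/n) * l2sq (y - X.mulVec βt) - (1/n) * l2sq ε|
        ≤ (6/n) * linf (Xᵀ.mulVec ε) * l1 βstar := by
  set L := linf (Xᵀ *ᵥ ε)
  have hlam_nonneg : 0 ≤ lam :=
    hlam ▸ div_nonneg (mul_nonneg zero_le_three (linf_nonneg _)) (by positivity)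
  have hlam_scaled : lam * Real.sqrt n * Real.sqrt (l2sq (y - X *ᵥ βt)) = 3 * L := by
    rw [hlam]; field_simp
  have hres : y - X *ᵥ βt = X *ᵥ (βstar - βt) + ε := by rw [hy, mulVec_sub]; abel
  have hD := sqrtLasso_residual_dotProduct_le hn hlam_nonneg hmin hpos βstar
  rw [mul_right_comm, hlam_scaled, hres, add_dotProduct, ← l2sq_eq_dotProduct] at hD
  have hE := (abs_dotProduct_mulVec_le X ε (βstar - βt)).trans
    (mul_le_mul_of_nonneg_left (l1_sub_le βstar βt) (linf_nonneg _))
  obtain ⟨hpred, hgap⟩ := l2sq_le_and_abs_l2sq_add_sub_le hE hD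
  rw [← mulVec_sub, hres, ← mul_sub, abs_mul, abs_of_pos (by positivity : (0 : ℝ) < 1 / n)]
  constructor
  · calc 1 / n * l2sq (X *ᵥ (βstar - βt)) ≤ 1 / n * (4 * L * l1 βstar - 2 * L * l1 βt) := by
          gcongr
      _ = _ := by ring
  · calc _ ≤ 1 / n * (6 * L * l1 βstar) := by gcongr
      _ = _ := by ring
end
end

section
/- Fix X ∈ ℝ^{n×p} and y ∈ ℝⁿ. (i) If β̂ ∈ ℝᵖ is a minimizer over β of the lasso objective (1/n)·‖y − Xβ‖₂² + 2λ·‖β‖₁ with λ > 0 and ‖β̂‖₁ > 0, then β̂ is a minimizer over β of the organic lasso objective (1/n)·‖y − Xβ‖₂² + 2ν·‖β‖₁² with ν = λ/(2·‖β̂‖₁). (ii) Conversely, if β̌ ∈ ℝᵖ is a minimizer of the organic lasso objective with parameter ν > 0 and ‖β̌‖₁ > 0, then β̌ is a minimizer of the lasso objective with parameter λ = 2ν·‖β̌‖₁. -/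
open MeasureTheory ProbabilityTheory Matrix
open scoped ENNReal

noncomputable section

open Set Filter Topology

/-!
Write `f` for the least-squares loss and `t` for the ℓ₁ norm of the given minimizer.

(i) is pure algebra: for `ν = λ / (2t)`,
`2ν‖β‖₁² = 2λ‖β‖₁ - λt + λ(‖β‖₁ - t)² / t`, and the last term is nonnegative and vanishes
at the lasso minimizer.

(ii) needs convexity of `f` and of `‖·‖₁`: comparing the organic minimizer with
`(1 - ε)β̌ + εβ` and letting `ε → 0⁺` gives the first-order condition
`f β - f β̌ + 4νt(‖β‖₁ - t) ≥ 0`, which is the lasso optimality inequality for `λ = 2νt`.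
-/

lemma ConvexOn.sum_comp_apply {ι : Type*} [Fintype ι] {φ : ℝ → ℝ}
    (hφ : ConvexOn ℝ univ φ) :
    ConvexOn ℝ univ fun v : ι → ℝ => ∑ i, φ (v i) := by
  refine ⟨convex_univ, fun x _ y _ a b ha hb hab => ?_⟩
  simp only [Pi.add_apply, Pi.smul_apply, smul_eq_mul, Finset.mul_sum, ← Finset.sum_add_distrib]
  exact Finset.sum_le_sum fun i _ => hφ.2 trivial trivial ha hb hab

lemma convexOn_l2sq {n : ℕ} : ConvexOn ℝ univ (l2sq (n := n)) :=
  (even_two.convexOn_pow).sum_comp_apply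

lemma convexOn_l1 {p : ℕ} : ConvexOn ℝ univ (l1 (p := p)) := by
  show ConvexOn ℝ univ fun b : Fin p → ℝ => ∑ j, |b j|
  have h := (convexOn_norm (convex_univ : Convex ℝ (univ : Set ℝ))).sum_comp_apply (ι := Fin p)
  simpa only [Real.norm_eq_abs] using h

lemma l1_nonneg {p : ℕ} (b : Fin p → ℝ) : 0 ≤ l1 b :=
  Finset.sum_nonneg fun _ _ => abs_nonneg _

lemma convexOn_leastSquares {n p : ℕ} (X : Matrix (Fin n) (Fin p) ℝ) (y : Fin n → ℝ) :
    ConvexOn ℝ univ fun β => (1 / n : ℝ) * l2sq (y - X *ᵥ β) := by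
  have h := (convexOn_l2sq.comp_affineMap (AffineMap.const ℝ _ y - X.mulVecLin.toAffineMap)).smul
    (by positivity : (0 : ℝ) ≤ 1 / n)
  exact h

lemma nonneg_of_forall_nonneg_add_mul {a b : ℝ}
    (h : ∀ ε : ℝ, 0 < ε → ε ≤ 1 → 0 ≤ a + ε * b) : 0 ≤ a := by
  have hlim : Tendsto (fun ε => a + ε * b) (𝓝[>] 0) (𝓝 a) :=
    tendsto_nhdsWithin_of_tendsto_nhds <| by
      have hc : Continuous fun ε : ℝ => a + ε * b := by fun_prop
      simpa using hc.tendsto 0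
  refine ge_of_tendsto hlim ?_
  filter_upwards [Ioc_mem_nhdsGT one_pos] with ε hε using h ε hε.1 hε.2

lemma minimizes_sq_penalty_of_minimizes_penalty {α : Type*} (f g : α → ℝ) {lam : ℝ}
    (hlam : 0 ≤ lam) {x₀ : α} (hx₀ : 0 < g x₀)
    (hmin : ∀ x, f x₀ + 2 * lam * g x₀ ≤ f x + 2 * lam * g x) (x : α) :
    f x₀ + 2 * (lam / (2 * g x₀)) * g x₀ ^ 2 ≤ f x + 2 * (lam / (2 * g x₀)) * g x ^ 2 := by
  have hval₀ : f x₀ + 2 * (lam / (2 * g x₀)) * g x₀ ^ 2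
      = f x₀ + 2 * lam * g x₀ - lam * g x₀ := by
    field_simp; ring
  have hval : f x + 2 * (lam / (2 * g x₀)) * g x ^ 2
      = f x + 2 * lam * g x - lam * g x₀ + lam * (g x - g x₀) ^ 2 / g x₀ := by
    field_simp; ring
  have hgap : 0 ≤ lam * (g x - g x₀) ^ 2 / g x₀ := by positivity
  linarith [hmin x]

lemma minimizes_penalty_of_minimizes_sq_penalty {E : Type*} [AddCommGroup E] [Module ℝ E]
    {f g : E → ℝ} (hf : ConvexOn ℝ univ f) (hg : ConvexOn ℝ univ g) (hg₀ : ∀ x, 0 ≤ g x)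
    {ν : ℝ} (hν : 0 ≤ ν) {x₀ : E}
    (hmin : ∀ x, f x₀ + 2 * ν * g x₀ ^ 2 ≤ f x + 2 * ν * g x ^ 2) (x : E) :
    f x₀ + 2 * (2 * ν * g x₀) * g x₀ ≤ f x + 2 * (2 * ν * g x₀) * g x := by
  suffices 0 ≤ f x - f x₀ + 4 * ν * g x₀ * (g x - g x₀) by linarith
  refine nonneg_of_forall_nonneg_add_mul (b := 2 * ν * (g x - g x₀) ^ 2) fun ε hε hε₁ => ?_
  have hfε : f ((1 - ε) • x₀ + ε • x) ≤ (1 - ε) * f x₀ + ε * f x :=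
    hf.2 trivial trivial (by linarith) hε.le (by ring)
  have hgε : g ((1 - ε) • x₀ + ε • x) ≤ (1 - ε) * g x₀ + ε * g x :=
    hg.2 trivial trivial (by linarith) hε.le (by ring)
  have hgε_sq := mul_le_mul_of_nonneg_left (pow_le_pow_left₀ (hg₀ _) hgε 2)
    (by positivity : 0 ≤ 2 * ν)
  have hmove : 0 ≤ ε * (f x - f x₀ + 4 * ν * g x₀ * (g x - g x₀)
      + ε * (2 * ν * (g x - g x₀) ^ 2)) := by
    linear_combination hmin ((1 - ε) • x₀ + ε • x) + hfε + hgε_sq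
  exact (mul_nonneg_iff_of_pos_left hε).1 hmove

theorem lasso_organic_path_mapping_general {n p : ℕ}
    (X : Matrix (Fin n) (Fin p) ℝ) (y : Fin n → ℝ) :
    (∀ lam : ℝ, 0 < lam → ∀ βhat : Fin p → ℝ, 0 < l1 βhat →
      (∀ β : Fin p → ℝ,
        (1/n) * l2sq (y - X.mulVec βhat) + 2*lam * l1 βhat
          ≤ (1/n) * l2sq (y - X.mulVec β) + 2*lam * l1 β) →
      (∀ β : Fin p → ℝ,
        (1/n) * l2sq (y - X.mulVec βhat) + 2*(lam/(2*l1 βhat)) * (l1 βhat)^2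
          ≤ (1/n) * l2sq (y - X.mulVec β) + 2*(lam/(2*l1 βhat)) * (l1 β)^2)) ∧
    (∀ ν : ℝ, 0 < ν → ∀ βc : Fin p → ℝ, 0 < l1 βc →
      (∀ β : Fin p → ℝ,
        (1/n) * l2sq (y - X.mulVec βc) + 2*ν * (l1 βc)^2
          ≤ (1/n) * l2sq (y - X.mulVec β) + 2*ν * (l1 β)^2) →
      (∀ β : Fin p → ℝ,
        (1/n) * l2sq (y - X.mulVec βc) + 2*(2*ν*l1 βc) * l1 βc
          ≤ (1/n) * l2sq (y - X.mulVec β) + 2*(2*ν*l1 βc) * l1 β)) :=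
  ⟨fun _ hlam _ hβhat hmin =>
    minimizes_sq_penalty_of_minimizes_penalty (fun β => (1 / n : ℝ) * l2sq (y - X *ᵥ β)) l1
      hlam.le hβhat hmin,
   fun _ hν _ _ hmin =>
    minimizes_penalty_of_minimizes_sq_penalty (convexOn_leastSquares X y) convexOn_l1 l1_nonneg
      hν.le hmin⟩

/-- mapping between the lasso and organic lasso solution paths. -/
theorem lasso_organic_path_mapping {n p : ℕ} (hn : 0 < n)
    (X : Matrix (Fin n) (Fin p) ℝ) (y : Fin n → ℝ) :
    (∀ lam : ℝ, 0 < lam → ∀ βhat : Fin p → ℝ, 0 < l1 βhat →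
      (∀ β : Fin p → ℝ,
        (1/n) * l2sq (y - X.mulVec βhat) + 2*lam * l1 βhat
          ≤ (1/n) * l2sq (y - X.mulVec β) + 2*lam * l1 β) →
      (∀ β : Fin p → ℝ,
        (1/n) * l2sq (y - X.mulVec βhat) + 2*(lam/(2*l1 βhat)) * (l1 βhat)^2
          ≤ (1/n) * l2sq (y - X.mulVec β) + 2*(lam/(2*l1 βhat)) * (l1 β)^2)) ∧
    (∀ ν : ℝ, 0 < ν → ∀ βc : Fin p → ℝ, 0 < l1 βc →
      (∀ β : Fin p → ℝ,
        (1/n) * l2sq (y - X.mulVec βc) + 2*ν * (l1 βc)^2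
          ≤ (1/n) * l2sq (y - X.mulVec β) + 2*ν * (l1 β)^2) →
      (∀ β : Fin p → ℝ,
        (1/n) * l2sq (y - X.mulVec βc) + 2*(2*ν*l1 βc) * l1 βc
          ≤ (1/n) * l2sq (y - X.mulVec β) + 2*(2*ν*l1 βc) * l1 β)) :=
  lasso_organic_path_mapping_general X y
end
end
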